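/- Let m ≥ 2 be even and let r ≥ 3 be odd. Then M(mK_r) = (mr²(mr+1)² + m)/8 − mr(mr+1)(2mr+1)/12 (an equality of rational numbers). -/

import Mathlib

open Finset

/-- The product-sum M(f) of a vertex labeling: the sum of `f u * f v` over all edges
`{u,v}` of `G`, each edge counted exactly once. -/
noncomputable def prodSum {V : Type*} [Fintype V] (G : SimpleGraph V) (f : V → ℕ) : ℕ := by
  classical
  exact ∑ e ∈ G.edgeFinset, Sym2.lift ⟨fun u v => f u * f v, fun u v => Nat.mul_comm _ _⟩ e

/-- A labeling of a graph on `V`: a bijection from the vertices onto `{1,…,|V|}`. -/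
def IsLabeling (V : Type*) [Fintype V] (f : V → ℕ) : Prop :=
  Set.BijOn f Set.univ (Set.Icc 1 (Fintype.card V))

/-- MinPS of `G`: the minimum of `M(f)` over all labelings `f`. -/
noncomputable def minPS {V : Type*} [Fintype V] (G : SimpleGraph V) : ℕ :=
  sInf { m | ∃ f : V → ℕ, IsLabeling V f ∧ prodSum G f = m }

/-- `mK_r`: the vertex-disjoint union of `m` copies of the complete graph `K_r`.
Vertex `(i, x)` lies in the `i`-th copy; two vertices are adjacent iff they are
distinct and lie in the same copy. -/
def mKGraph (m r : ℕ) : SimpleGraph (Fin m × Fin r) where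
  Adj a b := a.1 = b.1 ∧ a.2 ≠ b.2
  symm := ⟨fun a b h => ⟨h.1.symm, h.2.symm⟩⟩
  loopless := ⟨fun a h => h.2 rfl⟩

/-!
Within a copy of `K_r` the products `f(i,x) f(i,y)` add up to `(S_i² - Σ_x f(i,x)²) / 2`,
where `S_i` is the label sum of copy `i`. Since `Σ_i S_i = m A / 2` with `A = r(mr+1)`, this gives
`8 M(f) + 4 Σ_{k ≤ mr} k² = m A² + Σ_i (2 S_i - A)²`. For `m` even and `r` odd, `A` is odd, so
every `(2 S_i - A)²` is at least `1`. Equality is attained by giving column `j` of the `m × r`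
array the labels `jm + 1, …, jm + m` so that every row sum is `(A ± 1) / 2`.
-/
section Labeling

variable {V : Type*} [Fintype V] {f : V → ℕ}

theorem IsLabeling.of_injective (hf : Function.Injective f)
    (hmaps : ∀ v, f v ∈ Set.Icc 1 (Fintype.card V)) : IsLabeling V f := by
  refine ⟨fun v _ => hmaps v, hf.injOn, ?_⟩
  simpa using Finset.surjOn_of_injOn_of_card_le (s := univ) (t := Icc 1 (Fintype.card V)) f
    (fun v _ => by simpa using hmaps v) hf.injOn (by simp)

theorem IsLabeling.sum_comp {M : Type*} [AddCommMonoid M] (hf : IsLabeling V f) (g : ℕ → M) :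
    ∑ v, g (f v) = ∑ k ∈ Icc 1 (Fintype.card V), g k := by
  classical
  have himage : univ.image f = Icc 1 (Fintype.card V) :=
    Finset.coe_injective (by simpa using hf.image_eq)
  rw [← himage, Finset.sum_image fun u _ v _ h => hf.injOn (Set.mem_univ u) (Set.mem_univ v) h]

end Labeling

theorem two_mul_prodSum {V : Type*} [Fintype V] (G : SimpleGraph V) [DecidableRel G.Adj]
    (f : V → ℕ) : 2 * prodSum G f = ∑ u, f u * ∑ v ∈ G.neighborFinset u, f v := by
  classical
  set F : Sym2 V → ℕ := Sym2.lift ⟨fun u v => f u * f v, fun u v => Nat.mul_comm _ _⟩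
  have h_darts : ∑ d : G.Dart, F d.edge = 2 * prodSum G f := by
    have h_edges : prodSum G f = ∑ e ∈ G.edgeFinset, F e :=
      Finset.sum_congr (by ext; simp) fun _ _ => rfl
    rw [h_edges, ← Finset.sum_fiberwise_of_maps_to (g := SimpleGraph.Dart.edge)
      (t := G.edgeFinset) (by simp), Finset.mul_sum]
    refine Finset.sum_congr rfl fun e he => ?_
    rw [Finset.sum_congr rfl (g := fun _ => F e) (by simp +contextual), sum_const,
      G.dart_edge_fiber_card e (SimpleGraph.mem_edgeFinset.1 he), smul_eq_mul]
  have h_pairs : ∑ d : G.Dart, F d.edge =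
      ∑ q ∈ univ.filter (fun q : V × V => G.Adj q.1 q.2), f q.1 * f q.2 :=
    Finset.sum_bij' (fun d _ ↦ (d.fst, d.snd)) (fun q h ↦ ⟨q, (mem_filter.1 h).2⟩)
      (by simp) (by simp) (by simp) (by simp) fun _ _ => rfl
  rw [← h_darts, h_pairs, Finset.sum_filter, Fintype.sum_prod_type]
  simp [Finset.mul_sum, SimpleGraph.neighborFinset_eq_filter, Finset.sum_filter]

section Arithmetic

variable {ι : Type*} [Fintype ι]

theorem four_mul_sum_sq_eq (s : ι → ℤ) {A : ℤ} (hs : 2 * ∑ i, s i = Fintype.card ι * A) :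
    4 * ∑ i, s i ^ 2 = Fintype.card ι * A ^ 2 + ∑ i, (2 * s i - A) ^ 2 := by
  have h_expand : ∑ i, (2 * s i - A) ^ 2 = 4 * ∑ i, s i ^ 2 - 2 * A * (2 * ∑ i, s i)
      + Fintype.card ι * A ^ 2 := by
    have h_pointwise : ∀ i, (2 * s i - A) ^ 2 = 4 * s i ^ 2 - 2 * A * (2 * s i) + A ^ 2 :=
      fun i => by ring
    simp only [h_pointwise, sum_add_distrib, sum_sub_distrib, ← mul_sum, sum_const, card_univ,
      nsmul_eq_mul]
  rw [h_expand, hs]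
  ring

theorem card_le_sum_sq_two_mul_sub (s : ι → ℤ) {A : ℤ} (hA : Odd A) :
    (Fintype.card ι : ℤ) ≤ ∑ i, (2 * s i - A) ^ 2 := by
  have h_one_le : ∀ i, 1 ≤ (2 * s i - A) ^ 2 := fun i => by
    have h_odd : (2 * s i - A) % 2 = 1 := Int.odd_iff.mp ((even_two_mul (s i)).sub_odd hA)
    exact (one_le_sq_iff_one_le_abs _).mpr (Int.one_le_abs (by omega))
  simpa using sum_le_sum fun i (_ : i ∈ univ) => h_one_le i

end Arithmetic

theorem two_mul_sum_Icc_id (N : ℕ) : 2 * ∑ k ∈ Icc 1 N, (k : ℤ) = N * (N + 1) := by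
  induction N with
  | zero => simp
  | succ n ih =>
    rw [sum_Icc_succ_top (by omega), mul_add, ih]
    push_cast
    ring

theorem six_mul_sum_Icc_sq (N : ℕ) :
    6 * ∑ k ∈ Icc 1 N, (k : ℤ) ^ 2 = N * (N + 1) * (2 * N + 1) := by
  induction N with
  | zero => simp
  | succ n ih =>
    rw [sum_Icc_succ_top (by omega), mul_add, ih]
    push_cast
    ring

section MKGraph

variable {m r : ℕ}

instance : DecidableRel (mKGraph m r).Adj :=
  fun a b => inferInstanceAs (Decidable (a.1 = b.1 ∧ a.2 ≠ b.2))

theorem sum_neighborFinset_mKGraph_add (f : Fin m × Fin r → ℕ) (u : Fin m × Fin r) :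
    ∑ v ∈ (mKGraph m r).neighborFinset u, f v + f u = ∑ y, f (u.1, y) := by
  obtain ⟨i, x⟩ := u
  have h_nbhd : (mKGraph m r).neighborFinset (i, x) =
      (univ.erase x).map (Function.Embedding.sectR i (Fin r)) := by
    ext ⟨j, y⟩
    simp only [SimpleGraph.mem_neighborFinset, mem_map, mem_erase, mem_univ, and_true,
      Function.Embedding.sectR_apply, Prod.mk.injEq]
    constructor
    · rintro ⟨rfl, hxy⟩
      exact ⟨y, Ne.symm hxy, rfl, rfl⟩
    · rintro ⟨y, hyx, rfl, rfl⟩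
      exact ⟨rfl, Ne.symm hyx⟩
  rw [h_nbhd, sum_map]
  exact sum_erase_add _ _ (mem_univ x)

theorem two_mul_prodSum_mKGraph_add_sum_sq (f : Fin m × Fin r → ℕ) :
    2 * prodSum (mKGraph m r) f + ∑ v, f v ^ 2 = ∑ i, (∑ x, f (i, x)) ^ 2 := by
  calc 2 * prodSum (mKGraph m r) f + ∑ v, f v ^ 2
      = ∑ v, f v * (∑ w ∈ (mKGraph m r).neighborFinset v, f w + f v) := by
        rw [two_mul_prodSum, ← sum_add_distrib]; simp only [mul_add, sq]
    _ = ∑ i, ∑ x, f (i, x) * ∑ y, f (i, y) := by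
        simp only [sum_neighborFinset_mKGraph_add, Fintype.sum_prod_type]
    _ = ∑ i, (∑ x, f (i, x)) ^ 2 := by simp only [sq, sum_mul]


theorem eight_mul_prodSum_mKGraph {f : Fin m × Fin r → ℕ}
    (hf : IsLabeling (Fin m × Fin r) f) :
    8 * (prodSum (mKGraph m r) f : ℤ) + 4 * ∑ k ∈ Icc 1 (m * r), (k : ℤ) ^ 2 =
      m * (r * (m * r + 1)) ^ 2 + ∑ i, (2 * ∑ x, (f (i, x) : ℤ) - r * (m * r + 1)) ^ 2 := by
  have h_card : Fintype.card (Fin m × Fin r) = m * r := by simp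
  have h_squares : ∑ v, (f v : ℤ) ^ 2 = ∑ k ∈ Icc 1 (m * r), (k : ℤ) ^ 2 := by
    rw [hf.sum_comp (fun k => (k : ℤ) ^ 2), h_card]
  have h_rows : 2 * ∑ i, ∑ x, (f (i, x) : ℤ) = Fintype.card (Fin m) * (r * (m * r + 1)) := by
    rw [← Fintype.sum_prod_type', hf.sum_comp (fun k => (k : ℤ)), h_card, two_mul_sum_Icc_id,
      Fintype.card_fin]
    push_cast
    ring
  have h_struct := congrArg (Nat.cast : ℕ → ℤ) (two_mul_prodSum_mKGraph_add_sum_sq f)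
  push_cast at h_struct
  rw [h_squares] at h_struct
  have h_dev := four_mul_sum_sq_eq _ h_rows
  rw [Fintype.card_fin] at h_dev
  linear_combination 4 * h_struct + h_dev

theorem le_eight_mul_prodSum_mKGraph (hm : Even m) (hr : Odd r) {f : Fin m × Fin r → ℕ}
    (hf : IsLabeling (Fin m × Fin r) f) :
    (m : ℤ) * (r * (m * r + 1)) ^ 2 + m ≤
      8 * (prodSum (mKGraph m r) f : ℤ) + 4 * ∑ k ∈ Icc 1 (m * r), (k : ℤ) ^ 2 := by
  have hr' : Odd (r : ℤ) := by exact_mod_cast hr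
  have hm' : Even (m : ℤ) := by exact_mod_cast hm
  have h_odd : Odd ((r : ℤ) * (m * r + 1)) := hr'.mul (hm'.mul_right _).add_one
  have h_dev := card_le_sum_sq_two_mul_sub (fun i : Fin m => ∑ x, (f (i, x) : ℤ)) h_odd
  rw [Fintype.card_fin] at h_dev
  rw [eight_mul_prodSum_mKGraph hf]
  linarith

end MKGraph

section ColumnLabeling

variable {m r : ℕ}

def columnLabeling (m r : ℕ) (g : ℕ → ℕ → ℕ) (v : Fin m × Fin r) : ℕ :=
  v.2 * m + g v.2 v.1 + 1

theorem isLabeling_columnLabeling {g : ℕ → ℕ → ℕ}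
    (hg_maps : ∀ j, Set.MapsTo (g j) (Set.Iio m) (Set.Iio m))
    (hg_inj : ∀ j, Set.InjOn (g j) (Set.Iio m)) :
    IsLabeling (Fin m × Fin r) (columnLabeling m r g) := by
  have h_lt (v : Fin m × Fin r) : g v.2 v.1 < m := hg_maps _ v.1.isLt
  refine IsLabeling.of_injective (fun v w hvw => ?_) fun v => ?_
  · have h_blocks : ((v.2, ⟨_, h_lt v⟩) : Fin r × Fin m) = (w.2, ⟨_, h_lt w⟩) :=
      finProdFinEquiv.injective <| Fin.ext <| by
        simp only [columnLabeling] at hvw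
        simp only [finProdFinEquiv_apply_val]
        linarith
    simp only [Prod.mk.injEq, Fin.mk.injEq] at h_blocks
    obtain ⟨h_col, h_row⟩ := h_blocks
    exact Prod.ext (Fin.ext (hg_inj _ v.1.isLt w.1.isLt (by rwa [h_col] at h_row))) h_col
  · have h_row := h_lt v
    have h_col : (v.2 : ℕ) + 1 ≤ r := v.2.isLt
    simp only [Fintype.card_prod, Fintype.card_fin, Set.mem_Icc, columnLabeling]
    constructor
    · omega
    · nlinarith

theorem two_mul_sum_columnLabeling_sub (g : ℕ → ℕ → ℕ) (i : Fin m) :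
    2 * ∑ x : Fin r, (columnLabeling m r g (i, x) : ℤ) - r * (m * r + 1) =
      2 * ∑ j ∈ range r, (g j i : ℤ) - r * (m - 1) := by
  simp only [columnLabeling]
  rw [Fin.sum_univ_eq_sum_range (fun j => ((j * m + g j i + 1 : ℕ) : ℤ)) r]
  induction r with
  | zero => simp
  | succ r ih =>
    rw [sum_range_succ, sum_range_succ]
    push_cast at ih ⊢
    linear_combination ih

end ColumnLabeling

section BalancedColumns

/-- For `m = 2h`, columns `0, 1, 2` give the row sum `3h - 2` in the rows `i < h` and `3h - 1`
in the rows `i ≥ h`; the later columns come in pairs `i`, `m - 1 - i` adding `m - 1` to each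
row. -/
def balancedColumns (h j i : ℕ) : ℕ :=
  if j = 0 then i
  else if j = 1 then (if i < h then i + h else i - h)
  else if j = 2 then (if i < h then 2 * (h - 1 - i) else 2 * (2 * h - 1 - i) + 1)
  else if j % 2 = 1 then i else 2 * h - 1 - i

variable (h : ℕ)

theorem balancedColumns_mapsTo (j : ℕ) :
    Set.MapsTo (balancedColumns h j) (Set.Iio (2 * h)) (Set.Iio (2 * h)) := by
  intro i (hi : i < 2 * h)
  show balancedColumns h j i < 2 * h
  unfold balancedColumns
  split_ifs <;> omega

theorem balancedColumns_injOn (j : ℕ) : Set.InjOn (balancedColumns h j) (Set.Iio (2 * h)) := by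
  intro i (hi : i < 2 * h) i' (hi' : i' < 2 * h) h_eq
  unfold balancedColumns at h_eq
  split_ifs at h_eq <;> omega

theorem two_mul_sum_balancedColumns_sub {i : ℕ} (hi : i < 2 * h) (u : ℕ) :
    2 * ∑ j ∈ range (2 * u + 3), (balancedColumns h j i : ℤ) - (2 * u + 3) * (2 * h - 1) =
      if i < h then -1 else 1 := by
  induction u with
  | zero =>
    simp only [mul_zero, zero_add, sum_range_succ, sum_range_zero, balancedColumns, ↓reduceIte,
      one_ne_zero, OfNat.ofNat_ne_zero, OfNat.ofNat_ne_one]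
    split_ifs <;> omega
  | succ u ih =>
    have h_odd : balancedColumns h (2 * u + 3) i = i := by
      rw [balancedColumns, if_neg (by omega), if_neg (by omega), if_neg (by omega),
        if_pos (by omega)]
    have h_even : (balancedColumns h (2 * u + 3 + 1) i : ℤ) = 2 * h - 1 - i := by
      rw [balancedColumns, if_neg (by omega), if_neg (by omega), if_neg (by omega),
        if_neg (by omega)]
      omega
    rw [show 2 * (u + 1) + 3 = 2 * u + 3 + 1 + 1 by ring, sum_range_succ, sum_range_succ, h_odd,
      h_even, ← ih]
    push_cast
    ring

end BalancedColumns

theorem sum_sq_two_mul_sum_columnLabeling_balancedColumns_sub {m r h u : ℕ} (hm : m = 2 * h)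
    (hr : r = 2 * u + 3) :
    ∑ i : Fin m, (2 * ∑ x : Fin r, (columnLabeling m r (balancedColumns h) (i, x) : ℤ)
      - r * (m * r + 1)) ^ 2 = (m : ℤ) := by
  have h_row (i : Fin m) : (2 * ∑ x : Fin r, (columnLabeling m r (balancedColumns h) (i, x) : ℤ)
      - r * (m * r + 1)) ^ 2 = 1 := by
    subst hm hr
    rw [two_mul_sum_columnLabeling_sub]
    push_cast
    rw [two_mul_sum_balancedColumns_sub h i.isLt]
    split_ifs <;> norm_num
  simp [h_row]

theorem statement6_general (m r : ℕ) (hmeven : Even m) (hr : 3 ≤ r) (hrodd : Odd r) :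
    (minPS (mKGraph m r) : ℚ) =
      ((m : ℚ) * r ^ 2 * (m * r + 1) ^ 2 + m) / 8
        - m * r * (m * r + 1) * (2 * m * r + 1) / 12 := by
  obtain ⟨h, hh⟩ := hmeven.two_dvd
  obtain ⟨u, hu⟩ : ∃ u, r = 2 * u + 3 := by
    obtain ⟨k, hk⟩ := hrodd
    exact ⟨k - 1, by omega⟩
  set f₀ := columnLabeling m r (balancedColumns h)
  have hf₀ : IsLabeling (Fin m × Fin r) f₀ := by
    subst hh
    exact isLabeling_columnLabeling (balancedColumns_mapsTo h) (balancedColumns_injOn h)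
  have h_opt := eight_mul_prodSum_mKGraph hf₀
  rw [sum_sq_two_mul_sum_columnLabeling_balancedColumns_sub hh hu] at h_opt
  have h_min : minPS (mKGraph m r) = prodSum (mKGraph m r) f₀ := by
    refine IsLeast.csInf_eq ⟨⟨f₀, hf₀, rfl⟩, ?_⟩
    rintro _ ⟨f, hf, rfl⟩
    have h_lower := le_eight_mul_prodSum_mKGraph hmeven hrodd hf
    omega
  have h_squares := six_mul_sum_Icc_sq (m * r)
  rw [h_min]
  qify at h_opt h_squares
  linear_combination h_opt / 8 - h_squares / 12

/-- For even `m ≥ 2` and odd `r ≥ 3`,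
`M(mK_r) = (mr²(mr+1)² + m)/8 − mr(mr+1)(2mr+1)/12`. -/
theorem statement6 (m r : ℕ) (hm : 2 ≤ m) (hmeven : Even m) (hr : 3 ≤ r) (hrodd : Odd r) :
    (minPS (mKGraph m r) : ℚ) =
      ((m : ℚ) * r ^ 2 * (m * r + 1) ^ 2 + m) / 8
        - m * r * (m * r + 1) * (2 * m * r + 1) / 12 :=
  statement6_general m r hmeven hr hrodd
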